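/- arXiv:2005.12845 — 2 statements merged into one kernel-verified Lean document; each statement's English description precedes it below -/
import Mathlib

section
/- For every x > 0, the series ∑_{n=1}^∞ (-1)^{n+1} (Γ(n+1/2)/(2n-1)!) x^{-n-1/2} converges absolutely, and its absolute value is bounded by Γ(3/2) x^{-3/2} + x^{-1/2}(e^{1/x} - 1 - 1/x); in particular the sum is O(x^{-3/2}) as x → ∞. -/
open Real Filter Asymptotics

lemma gamma32_le_one : Real.Gamma (3/2) ≤ 1 := by
  have h : Real.Gamma (3/2) = (1/2) * Real.sqrt π := by
    rw [show (3/2 : ℝ) = 1/2 + 1 by norm_num, Real.Gamma_add_one (by norm_num),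
      Real.Gamma_one_half_eq]
  rw [h]
  nlinarith [Real.sq_sqrt Real.pi_pos.le, Real.sqrt_nonneg π, Real.pi_le_four]

lemma gamma_pos32 (n : ℕ) : 0 < Real.Gamma ((n : ℝ) + 3/2) :=
  Real.Gamma_pos_of_pos (by positivity)

lemma key_ineq (n : ℕ) :
    Real.Gamma ((n : ℝ) + 3/2) * ((n+1).factorial : ℝ) ≤ ((2*n+1).factorial : ℝ) := by
  induction n with
  | zero => simpa using gamma32_le_one
  | succ n ih =>
    have h1 : Real.Gamma (((n+1 : ℕ) : ℝ) + 3/2) = ((n : ℝ) + 3/2) * Real.Gamma ((n : ℝ) + 3/2) := by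
      rw [show (((n+1 : ℕ) : ℝ) + 3/2) = ((n : ℝ) + 3/2) + 1 by push_cast; ring,
        Real.Gamma_add_one (by positivity)]
    have h2 : ((n+1+1).factorial : ℝ) = ((n : ℝ) + 2) * (n+1).factorial := by
      rw [Nat.factorial_succ]; push_cast; ring
    have h3 : ((2*(n+1)+1).factorial : ℝ)
        = ((2*n+3 : ℕ) : ℝ) * ((2*n+2 : ℕ) : ℝ) * (2*n+1).factorial := by
      rw [show 2*(n+1)+1 = (2*n+2)+1 by ring, Nat.factorial_succ, show 2*n+2 = (2*n+1)+1 by ring,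
        Nat.factorial_succ]
      push_cast; ring
    rw [h1, h2, h3]
    have hg := gamma_pos32 n
    have : ((n : ℝ) + 3/2) * ((n : ℝ) + 2) ≤ ((2*n+3 : ℕ) : ℝ) * ((2*n+2 : ℕ) : ℝ) := by
      push_cast; nlinarith [Nat.cast_nonneg (α := ℝ) n]
    calc ((n : ℝ) + 3/2) * Real.Gamma ((n : ℝ) + 3/2) * (((n : ℝ) + 2) * (n+1).factorial)
        = (((n : ℝ) + 3/2) * ((n : ℝ) + 2)) * (Real.Gamma ((n : ℝ) + 3/2) * (n+1).factorial) := by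
          ring
      _ ≤ (((2*n+3 : ℕ) : ℝ) * ((2*n+2 : ℕ) : ℝ)) * ((2*n+1).factorial : ℝ) := by
          apply mul_le_mul this ih (by positivity) (by positivity)
      _ = _ := by ring

lemma exp_tail (y : ℝ) :
    ∑' n : ℕ, y ^ (n+2) / ((n+2).factorial : ℝ) = Real.exp y - 1 - y := by
  have hs := Real.summable_pow_div_factorial y
  have h := Summable.sum_add_tsum_nat_add 2 hs
  have he : Real.exp y = ∑' n : ℕ, y ^ n / (n.factorial : ℝ) := by
    rw [Real.exp_eq_exp_ℝ, NormedSpace.exp_eq_tsum_div]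
  have h3 : ∑ i ∈ Finset.range 2, y ^ i / (i.factorial : ℝ) = 1 + y := by
    simp [Finset.sum_range_succ]
  rw [h3] at h
  linarith [h, he.symm]

set_option maxHeartbeats 1000000 in
lemma stable_aux (x : ℝ) (hx : 0 < x) :
    Summable (fun n : ℕ =>
      |(-1 : ℝ) ^ ((n + 1) + 1) * Real.Gamma (((n : ℝ) + 1) + 1 / 2) /
          (2 * (n + 1) - 1).factorial * x ^ (-((n : ℝ) + 1) - 1 / 2)|) ∧
    |∑' n : ℕ, (-1 : ℝ) ^ ((n + 1) + 1) * Real.Gamma (((n : ℝ) + 1) + 1 / 2) /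
          (2 * (n + 1) - 1).factorial * x ^ (-((n : ℝ) + 1) - 1 / 2)| ≤
      Real.Gamma (3 / 2) * x ^ (-(3 : ℝ) / 2) +
        x ^ (-(1 : ℝ) / 2) * (Real.exp (1 / x) - 1 - 1 / x) := by
  set g : ℕ → ℝ := fun n =>
    (-1 : ℝ) ^ ((n + 1) + 1) * Real.Gamma (((n : ℝ) + 1) + 1 / 2) /
      (2 * (n + 1) - 1).factorial * x ^ (-((n : ℝ) + 1) - 1 / 2) with hgdef
  have habs : ∀ n : ℕ, |g n| =
      Real.Gamma (((n : ℝ) + 1) + 1 / 2) / ((2 * (n + 1) - 1).factorial : ℝ) *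
        x ^ (-((n : ℝ) + 1) - 1 / 2) := by
    intro n
    have hg : 0 < Real.Gamma (((n : ℝ) + 1) + 1 / 2) := Real.Gamma_pos_of_pos (by positivity)
    have hx' : 0 < x ^ (-((n : ℝ) + 1) - 1 / 2) := Real.rpow_pos_of_pos hx _
    rw [hgdef]
    rw [abs_mul, abs_div, abs_mul, abs_pow, abs_neg, abs_one, one_pow, one_mul,
      abs_of_pos hg, Nat.abs_cast, abs_of_pos hx']
  have hbound : ∀ n : ℕ, |g n| ≤ x ^ (-(1:ℝ)/2) * (x⁻¹ ^ (n+1) / ((n+1).factorial : ℝ)) := by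
    intro n
    rw [habs n]
    have hxpow : x ^ (-((n : ℝ) + 1) - 1/2) = x ^ (-(1:ℝ)/2) * x⁻¹ ^ (n+1) := by
      rw [show -((n : ℝ) + 1) - 1/2 = -(1:ℝ)/2 + (-(((n+1 : ℕ)) : ℝ)) by push_cast; ring,
        Real.rpow_add hx, Real.rpow_neg hx.le, Real.rpow_natCast, inv_pow]
    have hc : Real.Gamma (((n : ℝ) + 1) + 1/2) / ((2*(n+1)-1).factorial : ℝ)
        ≤ 1 / ((n+1).factorial : ℝ) := by
      rw [show (2*(n+1)-1) = 2*n+1 by omega, div_le_div_iff₀ (by positivity) (by positivity),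
        one_mul, show ((n : ℝ) + 1) + 1/2 = (n : ℝ) + 3/2 by ring]
      exact key_ineq n
    rw [hxpow]
    have hnn : (0:ℝ) ≤ x ^ (-(1:ℝ)/2) * x⁻¹ ^ (n+1) := by positivity
    calc Real.Gamma (((n : ℝ) + 1) + 1/2) / ((2*(n+1)-1).factorial : ℝ) *
          (x ^ (-(1:ℝ)/2) * x⁻¹ ^ (n+1))
        ≤ 1 / ((n+1).factorial : ℝ) * (x ^ (-(1:ℝ)/2) * x⁻¹ ^ (n+1)) :=
          mul_le_mul_of_nonneg_right hc hnn
      _ = x ^ (-(1:ℝ)/2) * (x⁻¹ ^ (n+1) / ((n+1).factorial : ℝ)) := by ring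
  have hS : Summable (fun n : ℕ => x ^ (-(1:ℝ)/2) * (x⁻¹ ^ (n+1) / ((n+1).factorial : ℝ))) :=
    ((summable_nat_add_iff 1).2 (Real.summable_pow_div_factorial x⁻¹)).mul_left _
  have hgsum : Summable (fun n => |g n|) :=
    Summable.of_nonneg_of_le (fun n => abs_nonneg _) hbound hS
  refine ⟨hgsum, ?_⟩
  have hgsum' : Summable g := by
    rw [← summable_abs_iff]; exact hgsum
  have h0 : |g 0| = Real.Gamma (3/2) * x ^ (-(3:ℝ)/2) := by
    rw [habs 0]
    norm_num
  have hsplit := Summable.sum_add_tsum_nat_add 1 hgsum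
  have hsum0 : ∑ i ∈ Finset.range 1, |g i| = |g 0| := by simp
  rw [hsum0] at hsplit
  have hS2 : Summable (fun n : ℕ => x⁻¹ ^ (n+2) / ((n+2).factorial : ℝ)) :=
    (summable_nat_add_iff 2).2 (Real.summable_pow_div_factorial x⁻¹)
  have htail_le : ∑' n : ℕ, |g (n+1)| ≤
      ∑' n : ℕ, x ^ (-(1:ℝ)/2) * (x⁻¹ ^ (n+2) / ((n+2).factorial : ℝ)) := by
    apply Summable.tsum_le_tsum
    · intro n; exact hbound (n+1)
    · exact (summable_nat_add_iff 1).2 hgsum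
    · exact hS2.mul_left _
  have htail_eq : ∑' n : ℕ, x ^ (-(1:ℝ)/2) * (x⁻¹ ^ (n+2) / ((n+2).factorial : ℝ))
      = x ^ (-(1:ℝ)/2) * (Real.exp (1/x) - 1 - 1/x) := by
    rw [tsum_mul_left, exp_tail x⁻¹, one_div]
  have habs_tsum : |∑' n, g n| ≤ ∑' n, |g n| := by
    have hn : Summable (fun n => ‖g n‖) := by simpa [Real.norm_eq_abs] using hgsum
    simpa [Real.norm_eq_abs] using norm_tsum_le_tsum_norm hn
  calc |∑' n, g n| ≤ ∑' n, |g n| := habs_tsum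
    _ = |g 0| + ∑' n : ℕ, |g (n+1)| := hsplit.symm
    _ ≤ Real.Gamma (3/2) * x ^ (-(3:ℝ)/2) + x ^ (-(1:ℝ)/2) * (Real.exp (1/x) - 1 - 1/x) := by
        rw [h0]
        have := htail_le.trans_eq htail_eq
        linarith
    _ = _ := by norm_num

theorem stable_density_series_bound :
    (∀ x : ℝ, 0 < x →
      Summable (fun n : ℕ =>
        |(-1 : ℝ) ^ ((n + 1) + 1) * Real.Gamma (((n : ℝ) + 1) + 1 / 2) /
            (2 * (n + 1) - 1).factorial * x ^ (-((n : ℝ) + 1) - 1 / 2)|) ∧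
      |∑' n : ℕ, (-1 : ℝ) ^ ((n + 1) + 1) * Real.Gamma (((n : ℝ) + 1) + 1 / 2) /
            (2 * (n + 1) - 1).factorial * x ^ (-((n : ℝ) + 1) - 1 / 2)| ≤
        Real.Gamma (3 / 2) * x ^ (-(3 : ℝ) / 2) +
          x ^ (-(1 : ℝ) / 2) * (Real.exp (1 / x) - 1 - 1 / x)) ∧
    (fun x : ℝ => ∑' n : ℕ, (-1 : ℝ) ^ ((n + 1) + 1) * Real.Gamma (((n : ℝ) + 1) + 1 / 2) /
        (2 * (n + 1) - 1).factorial * x ^ (-((n : ℝ) + 1) - 1 / 2)) =O[atTop]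
      (fun x : ℝ => x ^ (-(3 : ℝ) / 2)) := by
  refine ⟨fun x hx => stable_aux x hx, ?_⟩
  rw [isBigO_iff]
  refine ⟨Real.Gamma (3/2) + 3/4, ?_⟩
  filter_upwards [eventually_ge_atTop (1:ℝ)] with x hx1
  have hx : 0 < x := lt_of_lt_of_le one_pos hx1
  have hmain := (stable_aux x hx).2
  have hy0 : 0 < 1/x := by positivity
  have hy1 : 1/x ≤ 1 := by rw [div_le_one hx]; exact hx1
  have htail : Real.exp (1/x) - 1 - 1/x ≤ 3/4 * (1/x) := by
    have h1 : |1/x| ≤ 1 := by rw [abs_of_pos hy0]; exact hy1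
    have h2 := Real.exp_bound h1 (n := 2) (by norm_num)
    have h3 : ∑ m ∈ Finset.range 2, (1/x) ^ m / (m.factorial : ℝ) = 1 + 1/x := by
      simp [Finset.sum_range_succ]
    rw [h3, abs_of_pos hy0] at h2
    have h4 := (abs_le.1 h2).2
    have h5 : (1/x)^2 ≤ 1/x := by nlinarith
    norm_num [Nat.factorial] at h4
    rw [one_div]
    have h5' : (x^2)⁻¹ ≤ x⁻¹ := inv_anti₀ hx (by nlinarith)
    nlinarith [h4, h5']
  have hsplit2 : x ^ (-(3:ℝ)/2) = x ^ (-(1:ℝ)/2) * x⁻¹ := by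
    rw [show x⁻¹ = x ^ (-1 : ℝ) by rw [Real.rpow_neg_one], ← Real.rpow_add hx]
    norm_num
  have hp : 0 ≤ x ^ (-(1:ℝ)/2) := (Real.rpow_pos_of_pos hx _).le
  have hterm : x ^ (-(1:ℝ)/2) * (Real.exp (1/x) - 1 - 1/x) ≤ 3/4 * x ^ (-(3:ℝ)/2) := by
    calc x ^ (-(1:ℝ)/2) * (Real.exp (1/x) - 1 - 1/x)
        ≤ x ^ (-(1:ℝ)/2) * (3/4 * (1/x)) := mul_le_mul_of_nonneg_left htail hp
      _ = 3/4 * x ^ (-(3:ℝ)/2) := by rw [hsplit2, one_div]; ring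
  rw [Real.norm_eq_abs, Real.norm_eq_abs, abs_of_pos (Real.rpow_pos_of_pos hx _)]
  have : Real.Gamma (3/2) * x ^ (-(3:ℝ)/2) = Real.Gamma (3/2) * x ^ (-(3:ℝ)/2) := rfl
  nlinarith [hmain, hterm]
end

section
/- Let f(x) = 1/(π x^{1/2}(1+x²)^{3/4}) · exp((1/π) ∫_x^∞ (ln y)/(1+y²) dy) for x > 0. There exists U > 0 such that for all u ≥ U: |∫_u^∞ f(x) dx − 1/(π u)| ≤ (4/π²) (ln u)/u². -/
open Real MeasureTheory Set

lemma exp_le_one_add_two_mul {w : ℝ} (h0 : 0 ≤ w) (h1 : w ≤ 1/2) :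
    Real.exp w ≤ 1 + 2*w := by
  have h2 : 1 - w ≤ Real.exp (-w) := by linarith [Real.add_one_le_exp (-w)]
  have h3 : Real.exp (-w) * Real.exp w = 1 := by rw [← Real.exp_add]; simp
  have h4 : (1 - w) * Real.exp w ≤ 1 := by
    calc (1 - w) * Real.exp w ≤ Real.exp (-w) * Real.exp w :=
          mul_le_mul_of_nonneg_right h2 (Real.exp_pos w).le
      _ = 1 := h3
  nlinarith [Real.exp_pos w]

lemma log_le_two_sqrt {y : ℝ} (hy : 1 ≤ y) : Real.log y ≤ 2 * y ^ ((1:ℝ)/2) := by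
  have hy0 : (0:ℝ) < y := by linarith
  have h1 : Real.log (y ^ ((1:ℝ)/2)) = (1/2) * Real.log y := Real.log_rpow hy0 _
  have h2 : Real.log (y ^ ((1:ℝ)/2)) ≤ y ^ ((1:ℝ)/2) - 1 :=
    Real.log_le_sub_one_of_pos (Real.rpow_pos_of_pos hy0 _)
  nlinarith [Real.rpow_pos_of_pos hy0 ((1:ℝ)/2)]

lemma intg_log_one_add_sq {x : ℝ} (hx : 1 ≤ x) :
    IntegrableOn (fun y => Real.log y / (1 + y^2)) (Ioi x) := by
  have hx0 : (0:ℝ) < x := by linarith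
  have hg : IntegrableOn (fun y : ℝ => 2 * y ^ (-(3:ℝ)/2)) (Ioi x) :=
    (integrableOn_Ioi_rpow_of_lt (by norm_num) hx0).const_mul 2
  refine hg.mono' ?_ ?_
  · exact (Real.measurable_log.div
      (measurable_const.add (measurable_id.pow_const 2))).aestronglyMeasurable
  · filter_upwards [ae_restrict_mem measurableSet_Ioi] with y hy
    have hy1 : (1:ℝ) ≤ y := le_of_lt (lt_of_le_of_lt hx hy)
    have hy0 : (0:ℝ) < y := by linarith
    have hlog : 0 ≤ Real.log y := Real.log_nonneg hy1
    have hd : (0:ℝ) < 1 + y^2 := by positivity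
    rw [Real.norm_eq_abs, abs_of_nonneg (div_nonneg hlog hd.le)]
    have step1 : Real.log y / (1 + y^2) ≤ (2 * y ^ ((1:ℝ)/2)) / y^2 := by
      apply div_le_div₀ (by positivity) (by linarith [log_le_two_sqrt hy1]) (by positivity)
      nlinarith
    have step2 : (2 * y ^ ((1:ℝ)/2)) / y^2 = 2 * y ^ (-(3:ℝ)/2) := by
      rw [← Real.rpow_natCast y 2, mul_div_assoc, ← Real.rpow_sub hy0]
      norm_num
    linarith [step1, step2.le]

lemma I_nonneg {x : ℝ} (hx : 1 ≤ x) :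
    0 ≤ ∫ y in Ioi x, Real.log y / (1 + y^2) := by
  apply setIntegral_nonneg measurableSet_Ioi
  intro y hy
  exact div_nonneg (Real.log_nonneg (by linarith [mem_Ioi.1 hy])) (by positivity)

lemma I_le {x : ℝ} (hx : 1 ≤ x) :
    (∫ y in Ioi x, Real.log y / (1 + y^2)) ≤ (Real.log x + 4) / x := by
  have hx0 : (0:ℝ) < x := by linarith
  have hxr : (0:ℝ) < x ^ ((1:ℝ)/2) := Real.rpow_pos_of_pos hx0 _
  have hi2 : IntegrableOn (fun y : ℝ => y ^ (-(2:ℝ))) (Ioi x) :=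
    integrableOn_Ioi_rpow_of_lt (by norm_num) hx0
  have hi32 : IntegrableOn (fun y : ℝ => y ^ (-(3:ℝ)/2)) (Ioi x) :=
    integrableOn_Ioi_rpow_of_lt (by norm_num) hx0
  have hmono : (∫ y in Ioi x, Real.log y / (1 + y^2)) ≤
      ∫ y in Ioi x, (Real.log x * y ^ (-(2:ℝ)) + (2 * x ^ (-(1:ℝ)/2)) * y ^ (-(3:ℝ)/2)) := by
    apply setIntegral_mono_on (intg_log_one_add_sq hx)
      ((hi2.const_mul _).add (hi32.const_mul _)) measurableSet_Ioi
    intro y hy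
    have hxy : x < y := mem_Ioi.1 hy
    have hy1 : (1:ℝ) ≤ y := by linarith
    have hy0 : (0:ℝ) < y := by linarith
    have hyr : (0:ℝ) < y ^ ((1:ℝ)/2) := Real.rpow_pos_of_pos hy0 _
    have hy2 : (0:ℝ) < y^2 := by positivity
    have hlog2 : Real.log y ≤ Real.log x + 2 * (y ^ ((1:ℝ)/2) / x ^ ((1:ℝ)/2)) := by
      have hq : (1:ℝ) ≤ y / x := (one_le_div hx0).2 hxy.le
      have := log_le_two_sqrt hq
      rw [Real.log_div (by positivity) (by positivity),
        Real.div_rpow hy0.le hx0.le] at this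
      linarith
    have hlognn : 0 ≤ Real.log y := Real.log_nonneg hy1
    have step1 : Real.log y / (1 + y^2) ≤ Real.log y / y^2 :=
      div_le_div₀ hlognn le_rfl (by positivity) (by nlinarith)
    have ey2 : y ^ (-(2:ℝ)) = (y^2)⁻¹ := by
      rw [show (-(2:ℝ)) = -((2:ℕ):ℝ) by norm_num, Real.rpow_neg hy0.le, Real.rpow_natCast]
    have ey32 : y ^ (-(3:ℝ)/2) = y ^ ((1:ℝ)/2) / y^2 := by
      rw [eq_div_iff hy2.ne', ← Real.rpow_natCast y 2, ← Real.rpow_add hy0]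
      norm_num
    have ex12 : x ^ (-(1:ℝ)/2) = (x ^ ((1:ℝ)/2))⁻¹ := by
      rw [show (-(1:ℝ)/2) = -((1:ℝ)/2) by norm_num, Real.rpow_neg hx0.le]
    simp only [Pi.add_apply]
    rw [ey2, ey32, ex12]
    calc Real.log y / (1 + y^2) ≤ Real.log y / y^2 := step1
      _ ≤ (Real.log x + 2 * (y ^ ((1:ℝ)/2) / x ^ ((1:ℝ)/2))) / y^2 := by gcongr
      _ = Real.log x * (y^2)⁻¹ + 2 * (x ^ ((1:ℝ)/2))⁻¹ * (y ^ ((1:ℝ)/2) / y^2) := by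
          field_simp
  have hcomp : (∫ y in Ioi x, (Real.log x * y ^ (-(2:ℝ)) + (2 * x ^ (-(1:ℝ)/2)) * y ^ (-(3:ℝ)/2)))
      = (Real.log x + 4) / x := by
    rw [integral_add (hi2.const_mul _) (hi32.const_mul _), integral_const_mul, integral_const_mul,
      integral_Ioi_rpow_of_lt (by norm_num) hx0, integral_Ioi_rpow_of_lt (by norm_num) hx0]
    have e1 : -x ^ (-(2:ℝ) + 1) / (-(2:ℝ) + 1) = x⁻¹ := by
      norm_num [Real.rpow_neg_one]
    have e2 : x ^ (-(3:ℝ)/2 + 1) = (x ^ ((1:ℝ)/2))⁻¹ := by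
      rw [show (-(3:ℝ)/2 + 1) = -((1:ℝ)/2) by norm_num, Real.rpow_neg hx0.le]
    have e3 : x ^ (-(1:ℝ)/2) = (x ^ ((1:ℝ)/2))⁻¹ := by
      rw [show (-(1:ℝ)/2) = -((1:ℝ)/2) by norm_num, Real.rpow_neg hx0.le]
    have e4 : x ^ ((1:ℝ)/2) * x ^ ((1:ℝ)/2) = x := by
      rw [← Real.rpow_add hx0]; norm_num
    rw [e1, e2, e3]
    have hxr' : x ^ ((1:ℝ)/2) ≠ 0 := hxr.ne'
    field_simp
    nlinarith [e4]
  linarith [hmono, hcomp.le]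

lemma denom_le {x : ℝ} (hx : 0 < x) :
    x ^ ((1:ℝ)/2) * (1+x^2) ^ ((3:ℝ)/4) ≤ 1 + x^2 := by
  have h1 : x ^ ((1:ℝ)/2) = (x^2) ^ ((1:ℝ)/4) := by
    rw [← Real.rpow_natCast x 2, ← Real.rpow_mul hx.le]; norm_num
  have h2 : (x^2) ^ ((1:ℝ)/4) ≤ (1+x^2) ^ ((1:ℝ)/4) :=
    Real.rpow_le_rpow (by positivity) (by linarith) (by norm_num)
  have h3 : (1+x^2) ^ ((1:ℝ)/4) * (1+x^2) ^ ((3:ℝ)/4) = 1 + x^2 := by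
    rw [← Real.rpow_add (by positivity)]; norm_num
  calc x ^ ((1:ℝ)/2) * (1+x^2) ^ ((3:ℝ)/4)
      ≤ (1+x^2) ^ ((1:ℝ)/4) * (1+x^2) ^ ((3:ℝ)/4) := by
        rw [h1]; exact mul_le_mul_of_nonneg_right h2 (by positivity)
    _ = 1 + x^2 := h3

lemma denom_ge {x : ℝ} (hx : 0 < x) :
    x^2 ≤ x ^ ((1:ℝ)/2) * (1+x^2) ^ ((3:ℝ)/4) := by
  have h1 : (x^2 : ℝ) ^ ((3:ℝ)/4) ≤ (1+x^2) ^ ((3:ℝ)/4) :=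
    Real.rpow_le_rpow (by positivity) (by linarith) (by norm_num)
  have h2 : x ^ ((1:ℝ)/2) * (x^2) ^ ((3:ℝ)/4) = x^2 := by
    rw [← Real.rpow_natCast x 2, ← Real.rpow_mul hx.le, ← Real.rpow_add hx]
    norm_num
  calc (x^2:ℝ) = x ^ ((1:ℝ)/2) * (x^2) ^ ((3:ℝ)/4) := h2.symm
    _ ≤ _ := mul_le_mul_of_nonneg_left h1 (by positivity)

lemma rpow_neg_nat {x : ℝ} (hx : 0 < x) (n : ℕ) : x ^ (-(n:ℝ)) = (x^n)⁻¹ := by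
  rw [Real.rpow_neg hx.le, Real.rpow_natCast]

set_option maxHeartbeats 1000000 in
theorem cauchy_sup_tail_estimate (f : ℝ → ℝ)
    (hf : ∀ x : ℝ, 0 < x → f x =
      1 / (Real.pi * x ^ ((1 : ℝ) / 2) * (1 + x ^ 2) ^ ((3 : ℝ) / 4)) *
        Real.exp ((1 / Real.pi) * ∫ y in Set.Ioi x, Real.log y / (1 + y ^ 2))) :
    ∃ U : ℝ, 0 < U ∧ ∀ u : ℝ, U ≤ u →
      |(∫ x in Set.Ioi u, f x) - 1 / (Real.pi * u)| ≤
        (4 / Real.pi ^ 2) * (Real.log u / u ^ 2) := by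
  refine ⟨100, by norm_num, fun u hu => ?_⟩
  have hu0 : (0:ℝ) < u := by linarith
  have hu1 : (1:ℝ) ≤ u := by linarith
  set I : ℝ → ℝ := fun x => ∫ y in Ioi x, Real.log y / (1 + y^2) with hI
  set L : ℝ := Real.log u with hLdef
  have hL : 2 ≤ L := by
    have he : Real.exp 2 ≤ u := by
      have h1 : Real.exp 2 = Real.exp 1 * Real.exp 1 := by rw [← Real.exp_add]; norm_num
      nlinarith [Real.exp_one_lt_d9, Real.exp_pos 1]
    exact (Real.le_log_iff_exp_le hu0).2 he
  have hπ3 : (3:ℝ) < Real.pi := Real.pi_gt_three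
  have hπ0 : (0:ℝ) < Real.pi := Real.pi_pos
  have hπ4 : Real.pi < 4 := by linarith [Real.pi_lt_d2]
  -- pointwise bounds on (Ioi u)
  have hpt : ∀ x ∈ Ioi u,
      (1/Real.pi) * ((x^2)⁻¹ - (x^4)⁻¹) ≤ f x ∧
      f x ≤ (1/Real.pi) * (x^2)⁻¹ + (2/Real.pi^2*(L+4)) * (x^3)⁻¹
        + (2/(Real.pi^2*u)) * (x^2)⁻¹ := by
    intro x hx
    have hux : u < x := mem_Ioi.1 hx
    have hx0 : (0:ℝ) < x := by linarith
    have hx1 : (1:ℝ) ≤ x := by linarith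
    have hden : (0:ℝ) < Real.pi * x ^ ((1:ℝ)/2) * (1+x^2) ^ ((3:ℝ)/4) := by positivity
    have hfx : f x = 1 / (Real.pi * x ^ ((1:ℝ)/2) * (1+x^2) ^ ((3:ℝ)/4)) *
        Real.exp ((1/Real.pi) * I x) := hf x hx0
    have hI0 : 0 ≤ I x := I_nonneg hx1
    have hIle : I x ≤ (Real.log x + 4) / x := I_le hx1
    have hlogx : Real.log x ≤ x - 1 := Real.log_le_sub_one_of_pos hx0
    set w : ℝ := (1/Real.pi) * I x with hw
    have hw0 : 0 ≤ w := by positivity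
    have hw12 : w ≤ 1/2 := by
      have h2 : (Real.log x + 4)/x ≤ 3/2 := by
        rw [div_le_iff₀ hx0]; nlinarith
      have h3 : I x ≤ 3/2 := hIle.trans h2
      have h4 : 1/Real.pi ≤ 1/3 := by
        rw [div_le_div_iff₀ hπ0 (by norm_num)]; linarith
      calc w ≤ (1/3) * (3/2) := by
            apply mul_le_mul h4 h3 hI0 (by norm_num)
        _ = 1/2 := by norm_num
    constructor
    · -- lower bound
      have hg : 1/(Real.pi * (1+x^2)) ≤
          1 / (Real.pi * x ^ ((1:ℝ)/2) * (1+x^2) ^ ((3:ℝ)/4)) := by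
        apply one_div_le_one_div_of_le hden
        calc Real.pi * x ^ ((1:ℝ)/2) * (1+x^2) ^ ((3:ℝ)/4)
            = Real.pi * (x ^ ((1:ℝ)/2) * (1+x^2) ^ ((3:ℝ)/4)) := by ring
          _ ≤ Real.pi * (1+x^2) := mul_le_mul_of_nonneg_left (denom_le hx0) hπ0.le
      have hexp1 : (1:ℝ) ≤ Real.exp w := Real.one_le_exp hw0
      have hstep : (1/Real.pi) * ((x^2)⁻¹ - (x^4)⁻¹) ≤ 1/(Real.pi * (1+x^2)) := by
        have e : (x^2:ℝ)⁻¹ - (x^4)⁻¹ = (x^2-1)/x^4 := by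
          field_simp
        have e2 : ((x^2:ℝ)-1)/x^4 ≤ (1+x^2)⁻¹ := by
          rw [div_le_iff₀ (by positivity : (0:ℝ) < x^4)]
          have h5 : (0:ℝ) < 1 + x^2 := by positivity
          rw [inv_mul_eq_div, le_div_iff₀ h5]
          nlinarith
        have e3 : 1/(Real.pi * (1+x^2)) = (1/Real.pi) * (1+x^2)⁻¹ := by
          field_simp
        rw [e3, e]
        apply mul_le_mul_of_nonneg_left e2 (by positivity)
      calc (1/Real.pi) * ((x^2)⁻¹ - (x^4)⁻¹) ≤ 1/(Real.pi * (1+x^2)) := hstep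
        _ ≤ 1 / (Real.pi * x ^ ((1:ℝ)/2) * (1+x^2) ^ ((3:ℝ)/4)) := hg
        _ ≤ 1 / (Real.pi * x ^ ((1:ℝ)/2) * (1+x^2) ^ ((3:ℝ)/4)) * Real.exp w :=
            le_mul_of_one_le_right (by positivity) hexp1
        _ = f x := hfx.symm
    · -- upper bound
      have hg : 1 / (Real.pi * x ^ ((1:ℝ)/2) * (1+x^2) ^ ((3:ℝ)/4)) ≤ 1/(Real.pi * x^2) := by
        apply one_div_le_one_div_of_le (by positivity)
        calc Real.pi * x^2 ≤ Real.pi * (x ^ ((1:ℝ)/2) * (1+x^2) ^ ((3:ℝ)/4)) :=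
              mul_le_mul_of_nonneg_left (denom_ge hx0) hπ0.le
          _ = Real.pi * x ^ ((1:ℝ)/2) * (1+x^2) ^ ((3:ℝ)/4) := by ring
      have hexp : Real.exp w ≤ 1 + 2*w := exp_le_one_add_two_mul hw0 hw12
      have hwle : w ≤ (1/Real.pi) * ((Real.log x + 4)/x) :=
        mul_le_mul_of_nonneg_left hIle (by positivity)
      have hwle2 : 2*w ≤ (2/Real.pi) * ((Real.log x + 4)/x) := by
        have e : (2:ℝ)/Real.pi * ((Real.log x + 4)/x)
            = 2*((1/Real.pi)*((Real.log x + 4)/x)) := by ring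
        rw [e]; linarith
      have h6 : f x ≤ 1/(Real.pi * x^2) * (1 + (2/Real.pi) * ((Real.log x + 4)/x)) := by
        rw [hfx]
        apply mul_le_mul hg (hexp.trans (by linarith)) (Real.exp_pos w).le (by positivity)
      have h7 : 1/(Real.pi * x^2) * (1 + (2/Real.pi) * ((Real.log x + 4)/x))
          = (1/Real.pi) * (x^2)⁻¹ + (2/Real.pi^2) * ((Real.log x + 4)/x^3) := by
        field_simp
      have hlogxu : Real.log x ≤ L + x/u := by
        have : Real.log x = L + Real.log (x/u) := by
          rw [Real.log_div hx0.ne' hu0.ne']; ring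
        have h8 : Real.log (x/u) ≤ x/u - 1 := Real.log_le_sub_one_of_pos (by positivity)
        linarith
      have h9 : (Real.log x + 4)/x^3 ≤ (L+4)/x^3 + 1/(u*x^2) := by
        have h10 : (Real.log x + 4)/x^3 ≤ (L + 4 + x/u)/x^3 := by
          apply div_le_div₀ ?_ (by linarith) (by positivity) le_rfl
          have : 0 < x/u := by positivity
          linarith
        have h11 : ((L:ℝ) + 4 + x/u)/x^3 = (L+4)/x^3 + 1/(u*x^2) := by
          field_simp
        linarith [h10, h11.le]
      have h12 : (2/Real.pi^2) * ((Real.log x + 4)/x^3) ≤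
          (2/Real.pi^2*(L+4)) * (x^3)⁻¹ + (2/(Real.pi^2*u)) * (x^2)⁻¹ := by
        have h13 : (2/Real.pi^2) * ((L+4)/x^3 + 1/(u*x^2)) =
            (2/Real.pi^2*(L+4)) * (x^3)⁻¹ + (2/(Real.pi^2*u)) * (x^2)⁻¹ := by
          field_simp
        calc (2/Real.pi^2) * ((Real.log x + 4)/x^3)
            ≤ (2/Real.pi^2) * ((L+4)/x^3 + 1/(u*x^2)) :=
              mul_le_mul_of_nonneg_left h9 (by positivity)
          _ = _ := h13
      linarith [h6, h7.le, h12]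
  -- measurability of f on Ioi u
  have hanti : Antitone (fun x : ℝ => I (max x u)) := by
    intro a b hab
    dsimp only
    apply setIntegral_mono_set (intg_log_one_add_sq (hu1.trans (le_max_right a u)))
    · filter_upwards [ae_restrict_mem measurableSet_Ioi] with y hy
      have : (1:ℝ) ≤ y := le_trans (hu1.trans (le_max_right a u)) (le_of_lt (mem_Ioi.1 hy))
      exact div_nonneg (Real.log_nonneg this) (by positivity)
    · exact HasSubset.Subset.eventuallyLE (Ioi_subset_Ioi (max_le_max hab le_rfl))
  have hFmeas : Measurable (fun x : ℝ =>
      1 / (Real.pi * x ^ ((1:ℝ)/2) * (1+x^2) ^ ((3:ℝ)/4)) *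
        Real.exp ((1/Real.pi) * I (max x u))) := by
    apply Measurable.mul
    · apply Measurable.div measurable_const
      apply Measurable.mul
      · exact (continuous_const.mul (Real.continuous_rpow_const (by norm_num))).measurable
      · exact ((continuous_const.add (continuous_pow 2)).rpow_const
          (fun x => Or.inr (by norm_num))).measurable
    · exact Real.measurable_exp.comp (measurable_const.mul hanti.measurable)
  have hfae : f =ᵐ[volume.restrict (Ioi u)] (fun x =>
      1 / (Real.pi * x ^ ((1:ℝ)/2) * (1+x^2) ^ ((3:ℝ)/4)) *
        Real.exp ((1/Real.pi) * I (max x u))) := by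
    filter_upwards [ae_restrict_mem measurableSet_Ioi] with x hx
    rw [hf x (by linarith [mem_Ioi.1 hx]), max_eq_left (le_of_lt (mem_Ioi.1 hx))]
  have hfmeas : AEStronglyMeasurable f (volume.restrict (Ioi u)) :=
    hFmeas.aestronglyMeasurable.congr hfae.symm
  clear_value I
  clear hanti hFmeas hfae
  clear_value L
  -- rpow conversions
  have er2 : ∀ x:ℝ, 0 < x → x^(-(2:ℝ)) = (x^2)⁻¹ := fun x hx => by
    rw [show (-(2:ℝ)) = -((2:ℕ):ℝ) by norm_num, rpow_neg_nat hx]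
  have er3 : ∀ x:ℝ, 0 < x → x^(-(3:ℝ)) = (x^3)⁻¹ := fun x hx => by
    rw [show (-(3:ℝ)) = -((3:ℕ):ℝ) by norm_num, rpow_neg_nat hx]
  have er4 : ∀ x:ℝ, 0 < x → x^(-(4:ℝ)) = (x^4)⁻¹ := fun x hx => by
    rw [show (-(4:ℝ)) = -((4:ℕ):ℝ) by norm_num, rpow_neg_nat hx]
  -- integrability
  have hi2 : IntegrableOn (fun x : ℝ => x ^ (-(2:ℝ))) (Ioi u) :=
    integrableOn_Ioi_rpow_of_lt (by norm_num) hu0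
  have hi3 : IntegrableOn (fun x : ℝ => x ^ (-(3:ℝ))) (Ioi u) :=
    integrableOn_Ioi_rpow_of_lt (by norm_num) hu0
  have hi4 : IntegrableOn (fun x : ℝ => x ^ (-(4:ℝ))) (Ioi u) :=
    integrableOn_Ioi_rpow_of_lt (by norm_num) hu0
  have hiA : IntegrableOn (fun x : ℝ =>
      (1/Real.pi) * x ^ (-(2:ℝ)) + (2/Real.pi^2*(L+4)) * x ^ (-(3:ℝ))) (Ioi u) :=
    (hi2.const_mul _).add (hi3.const_mul _)
  have hFupInt : IntegrableOn (fun x : ℝ =>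
      ((1/Real.pi) * x ^ (-(2:ℝ)) + (2/Real.pi^2*(L+4)) * x ^ (-(3:ℝ)))
        + (2/(Real.pi^2*u)) * x ^ (-(2:ℝ))) (Ioi u) :=
    hiA.add (hi2.const_mul _)
  have hFlowInt : IntegrableOn (fun x : ℝ =>
      (1/Real.pi) * (x ^ (-(2:ℝ)) - x ^ (-(4:ℝ)))) (Ioi u) :=
    (hi2.sub hi4).const_mul _
  have hfint : IntegrableOn f (Ioi u) := by
    apply hFupInt.mono' hfmeas
    filter_upwards [ae_restrict_mem measurableSet_Ioi] with x hx
    have hx0 : (0:ℝ) < x := lt_trans hu0 (mem_Ioi.1 hx)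
    have hf0 : 0 ≤ f x := by
      rw [hf x hx0]; positivity
    rw [Real.norm_eq_abs, abs_of_nonneg hf0, er2 x hx0, er3 x hx0]
    exact (hpt x hx).2
  -- comparison of integrals
  have hup : (∫ x in Ioi u, f x) ≤ ∫ x in Ioi u,
      ((1/Real.pi) * x ^ (-(2:ℝ)) + (2/Real.pi^2*(L+4)) * x ^ (-(3:ℝ))
        + (2/(Real.pi^2*u)) * x ^ (-(2:ℝ))) := by
    apply setIntegral_mono_on hfint hFupInt measurableSet_Ioi
    intro x hx
    have hx0 : (0:ℝ) < x := lt_trans hu0 (mem_Ioi.1 hx)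
    rw [er2 x hx0, er3 x hx0]
    exact (hpt x hx).2
  have hlow : (∫ x in Ioi u, (1/Real.pi) * (x ^ (-(2:ℝ)) - x ^ (-(4:ℝ))))
      ≤ ∫ x in Ioi u, f x := by
    apply setIntegral_mono_on hFlowInt hfint measurableSet_Ioi
    intro x hx
    have hx0 : (0:ℝ) < x := lt_trans hu0 (mem_Ioi.1 hx)
    rw [er2 x hx0, er4 x hx0]
    exact (hpt x hx).1
  -- integral values
  have v2 : (∫ x in Ioi u, x ^ (-(2:ℝ))) = u⁻¹ := by
    rw [integral_Ioi_rpow_of_lt (by norm_num) hu0]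
    norm_num [Real.rpow_neg_one]
  have v3 : (∫ x in Ioi u, x ^ (-(3:ℝ))) = (u^2)⁻¹/2 := by
    rw [integral_Ioi_rpow_of_lt (by norm_num) hu0,
      show (-(3:ℝ)+1) = -((2:ℕ):ℝ) by norm_num, rpow_neg_nat hu0]
    ring
  have v4 : (∫ x in Ioi u, x ^ (-(4:ℝ))) = (u^3)⁻¹/3 := by
    rw [integral_Ioi_rpow_of_lt (by norm_num) hu0,
      show (-(4:ℝ)+1) = -((3:ℕ):ℝ) by norm_num, rpow_neg_nat hu0]
    ring
  have hupval : (∫ x in Ioi u,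
      ((1/Real.pi) * x ^ (-(2:ℝ)) + (2/Real.pi^2*(L+4)) * x ^ (-(3:ℝ))
        + (2/(Real.pi^2*u)) * x ^ (-(2:ℝ))))
      = (1/Real.pi) * u⁻¹ + (2/Real.pi^2*(L+4)) * ((u^2)⁻¹/2)
        + (2/(Real.pi^2*u)) * u⁻¹ := by
    rw [integral_add hiA (hi2.const_mul _),
      integral_add (hi2.const_mul _) (hi3.const_mul _),
      integral_const_mul, integral_const_mul, integral_const_mul, v2, v3]
  have hlowval : (∫ x in Ioi u, (1/Real.pi) * (x ^ (-(2:ℝ)) - x ^ (-(4:ℝ))))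
      = (1/Real.pi) * (u⁻¹ - (u^3)⁻¹/3) := by
    rw [integral_const_mul, integral_sub hi2 hi4, v2, v4]
  -- final estimate
  have keyup : (∫ x in Ioi u, f x) - 1/(Real.pi*u) ≤ (4/Real.pi^2) * (L/u^2) := by
    have e : (1/Real.pi) * u⁻¹ + (2/Real.pi^2*(L+4)) * ((u^2)⁻¹/2)
        + (2/(Real.pi^2*u)) * u⁻¹ = 1/(Real.pi*u) + (L+6)/(Real.pi^2*u^2) := by
      field_simp
      ring
    have e2 : (L+6)/(Real.pi^2*u^2) ≤ (4/Real.pi^2)*(L/u^2) := by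
      have e3 : (4/Real.pi^2)*(L/u^2) = (4*L)/(Real.pi^2*u^2) := by ring
      rw [e3]
      exact div_le_div₀ (by linarith) (by linarith) (by positivity) le_rfl
    linarith [hup, hupval.le, e.le]
  have keylow : 1/(Real.pi*u) - (∫ x in Ioi u, f x) ≤ (4/Real.pi^2) * (L/u^2) := by
    have e : (1/Real.pi) * (u⁻¹ - (u^3)⁻¹/3) = 1/(Real.pi*u) - 1/(3*Real.pi*u^3) := by
      field_simp
    have e2 : 1/(3*Real.pi*u^3) ≤ (4/Real.pi^2)*(L/u^2) := by
      have e3 : (4/Real.pi^2)*(L/u^2) = (4*L)/(Real.pi^2*u^2) := by ring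
      rw [e3, div_le_div_iff₀ (by positivity) (by positivity)]
      have h1 : Real.pi ≤ 12*L*u := by nlinarith
      nlinarith [mul_le_mul_of_nonneg_right h1
        (show (0:ℝ) ≤ Real.pi*u^2 by positivity)]
    linarith [hlow, hlowval.le, e.le]
  rw [abs_le]
  constructor <;> [linarith [keylow]; linarith [keyup]]
end
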